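/- Let r ∈ ℕ with r ≥ 2 and p ∈ (0,1). Let N₁ be negative binomial with parameters r+1 and p, and N₂ be negative binomial with parameters r−1 and 1−p, independent, let ĝ = (r/(N₁−1))·(N₂/(r−1)), V = Var[ĝ] = E[ĝ²] − (E[ĝ])², and S = E[N₁] + E[N₂]. Then the efficiency p/((1−p)³ · V · S) satisfies p/((1−p)³ · V · S) > ((r−1)/(r+1−2p))·(1 + p(1−p)/(r−1+p+p²)) > (r−1)/(r+1), where all expectations are the corresponding series weighted by the negative binomial probabilities. -/

import Mathlib

open scoped BigOperators

/-- Expectation of `f(N)` where `N` is negative binomial with parameters `s` and `q`: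
`E[f(N)] = Σ_{n ≥ s} f(n) C(n−1, s−1) q^s (1−q)^{n−s}`, written with `n = s + k`. -/
noncomputable def negbinExp (s : ℕ) (q : ℝ) (f : ℕ → ℝ) : ℝ :=
  ∑' k : ℕ, ((s + k - 1).choose (s - 1) : ℝ) * q ^ s * (1 - q) ^ k * f (s + k)

/-- Expectation of `f(N₁, N₂)` for independent negative binomials with parameters
`(s₁, q₁)` and `(s₂, q₂)`. -/
noncomputable def negbinExp2 (s₁ : ℕ) (q₁ : ℝ) (s₂ : ℕ) (q₂ : ℝ) (f : ℕ → ℕ → ℝ) : ℝ :=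
  ∑' k₁ : ℕ, ∑' k₂ : ℕ,
    ((s₁ + k₁ - 1).choose (s₁ - 1) : ℝ) * q₁ ^ s₁ * (1 - q₁) ^ k₁ *
      (((s₂ + k₂ - 1).choose (s₂ - 1) : ℝ) * q₂ ^ s₂ * (1 - q₂) ^ k₂) *
      f (s₁ + k₁) (s₂ + k₂)

/-- The m-th harmonic number `H_m = Σ_{k=1}^m 1/k`, `H_0 = 0`. -/
noncomputable def H (m : ℕ) : ℝ := ∑ k ∈ Finset.range m, (1 : ℝ) / (k + 1)

/-- The odds estimator `ĝ = (r/(N₁−1))·(N₂/(r−1))`. -/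
noncomputable def ghat (r : ℕ) (n₁ n₂ : ℕ) : ℝ :=
  ((r : ℝ) / ((n₁ : ℝ) - 1)) * ((n₂ : ℝ) / ((r : ℝ) - 1))

/-!
The estimator factors as `ĝ = X · Y` with `X = r/(N₁ - 1)` and `Y = N₂/(r - 1)` independent,
`E X = p`, `E Y = 1/(1 - p)` and `E Y²` explicit, so `Var ĝ = A · E Y² - (p/(1 - p))²` with
`A = E X²`. All negative binomial moments used here come from the size-biasing identity
`q (s + k) w_s(k) = s w_{s+1}(k)` for the weights of the shapes `s` and `s + 1`.

Everything then rests on two bounds for `A`. Jensen gives `A ≥ p²`, hence `Var ĝ > 0`. For the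
upper bound, `(1 - p)^r A / (r p^(r+1))` is the power series `Σ C(k+r-1, r-1) x^(k+r)/(k+r)` at
`x = 1 - p`, that is `∫₀ˣ t^(r-1)/(1 - t)^r dt`. This integral is strictly smaller than an explicit
rational function of `x` whose derivative dominates the integrand. With the resulting bound on
`Var ĝ`, the efficiency is strictly larger than the middle expression.
-/

open Set

theorem sq_le_of_hasSum {ι : Type*} {w f : ι → ℝ} {a b : ℝ} (hw : ∀ i, 0 ≤ w i)
    (h₁ : HasSum w 1) (ha : HasSum (fun i => w i * f i) a)
    (hb : HasSum (fun i => w i * f i ^ 2) b) : a ^ 2 ≤ b := by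
  have h := (ha.mul_left (2 * a)).sub (h₁.mul_left (a ^ 2))
  rw [show 2 * a * a - a ^ 2 * 1 = a ^ 2 by ring] at h
  refine hasSum_le (fun i => ?_) h hb
  nlinarith [mul_nonneg (hw i) (sq_nonneg (f i - a))]

theorem tsum_choose_mul_pow_div_le_integral (j : ℕ) {x : ℝ} (hx₀ : 0 ≤ x) (hx₁ : x < 1) :
    ∑' k : ℕ, ((k + j).choose j : ℝ) * x ^ (k + j + 1) / (k + j + 1) ≤
      ∫ t in (0 : ℝ)..x, t ^ j / (1 - t) ^ (j + 1) := by
  have hgeom (t : ℝ) (ht₀ : 0 ≤ t) (ht₁ : t < 1) :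
      HasSum (fun k : ℕ => ((k + j).choose j : ℝ) * t ^ k) (1 / (1 - t) ^ (j + 1)) :=
    hasSum_choose_mul_geometric_of_norm_lt_one j
      (by rw [Real.norm_eq_abs, abs_lt]; constructor <;> linarith)
  have hsumm : Summable fun k : ℕ => ((k + j).choose j : ℝ) * x ^ (k + j + 1) / (k + j + 1) := by
    refine Summable.of_nonneg_of_le (fun k => by positivity) (fun k => ?_)
      ((hgeom x hx₀ hx₁).summable.mul_right (x ^ (j + 1)))
    calc ((k + j).choose j : ℝ) * x ^ (k + j + 1) / (k + j + 1)
        ≤ ((k + j).choose j : ℝ) * x ^ (k + j + 1) :=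
          div_le_self (by positivity) (by linarith [(k + j : ℕ).cast_nonneg (α := ℝ)])
      _ = ((k + j).choose j : ℝ) * x ^ k * x ^ (j + 1) := by ring
  have hg : ContinuousOn (fun t : ℝ => t ^ j / (1 - t) ^ (j + 1)) (uIcc 0 x) := by
    rw [uIcc_of_le hx₀]
    exact ContinuousOn.div (by fun_prop) (by fun_prop)
      fun t ht => pow_ne_zero _ (by linarith [ht.2])
  refine hsumm.tsum_le_of_sum_le fun s => ?_
  have hterm (k : ℕ) : ((k + j).choose j : ℝ) * x ^ (k + j + 1) / (k + j + 1) =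
      ∫ t in (0 : ℝ)..x, ((k + j).choose j : ℝ) * t ^ (k + j) := by
    rw [intervalIntegral.integral_const_mul, integral_pow]
    push_cast
    ring
  rw [Finset.sum_congr rfl fun k _ => hterm k, ← intervalIntegral.integral_finsetSum
    fun k _ => by apply Continuous.intervalIntegrable; fun_prop]
  refine intervalIntegral.integral_mono_on hx₀
    (by apply Continuous.intervalIntegrable; fun_prop) hg.intervalIntegrable fun t ht => ?_
  calc ∑ k ∈ s, ((k + j).choose j : ℝ) * t ^ (k + j)
      = t ^ j * ∑ k ∈ s, ((k + j).choose j : ℝ) * t ^ k := by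
        rw [Finset.mul_sum]
        exact Finset.sum_congr rfl fun k _ => by ring
    _ ≤ t ^ j * (1 / (1 - t) ^ (j + 1)) :=
        mul_le_mul_of_nonneg_left (sum_le_hasSum s (fun k _ => by have := ht.1; positivity)
          (hgeom t ht.1 (by linarith [ht.2]))) (pow_nonneg ht.1 j)
    _ = t ^ j / (1 - t) ^ (j + 1) := mul_one_div _ _

noncomputable def primitiveMajorant (m : ℕ) (x : ℝ) : ℝ :=
  x ^ (m + 2) * ((m + 2) * (m + 3) - (2 * m + 5) * x + x ^ 2) /
    ((m + 2) * (1 - x) ^ (m + 1) * (m + 2 - x) * (m + 3 - 2 * x))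

theorem hasDerivAt_primitiveMajorant (m : ℕ) {x : ℝ} (hx : x < 1) :
    HasDerivAt (primitiveMajorant m)
      (x ^ (m + 1) / (1 - x) ^ (m + 2) +
        2 * x ^ (m + 3) / ((m + 2) * (1 - x) ^ (m + 1) * (m + 3 - 2 * x) ^ 2)) x := by
  have hm := m.cast_nonneg (α := ℝ)
  have h₁ : 0 < 1 - x := by linarith
  have h₂ : 0 < (m : ℝ) + 2 - x := by linarith
  have h₃ : 0 < (m : ℝ) + 3 - 2 * x := by linarith
  have hid := hasDerivAt_id x
  have hnum := (hasDerivAt_pow (m + 2) x).mul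
    (((hasDerivAt_const x (((m : ℝ) + 2) * (m + 3))).sub (hid.const_mul (2 * (m : ℝ) + 5))).add
      (hasDerivAt_pow 2 x))
  have hden := ((((hid.const_sub 1).pow (m + 1)).const_mul ((m : ℝ) + 2)).mul
    (hid.const_sub ((m : ℝ) + 2))).mul ((hid.const_mul 2).const_sub ((m : ℝ) + 3))
  have hne : ((m : ℝ) + 2) * (1 - x) ^ (m + 1) * (m + 2 - x) * (m + 3 - 2 * x) ≠ 0 := by positivity
  refine (hnum.div hden hne).congr_deriv ?_
  simp only [Pi.pow_apply, Pi.mul_apply, Pi.add_apply, Pi.sub_apply, id, Nat.add_sub_cancel]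
  push_cast
  field_simp
  ring

theorem integral_lt_primitiveMajorant (m : ℕ) {x : ℝ} (hx₀ : 0 < x) (hx₁ : x < 1) :
    ∫ t in (0 : ℝ)..x, t ^ (m + 1) / (1 - t) ^ (m + 2) < primitiveMajorant m x := by
  have hden (t : ℝ) (ht : t ≤ x) : 0 < 1 - t ∧ 0 < (m : ℝ) + 3 - 2 * t := by
    constructor <;> linarith [m.cast_nonneg (α := ℝ)]
  have hextra (t : ℝ) (ht : t ∈ Ioc 0 x) :
      0 < 2 * t ^ (m + 3) / ((m + 2) * (1 - t) ^ (m + 1) * (m + 3 - 2 * t) ^ 2) := by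
    obtain ⟨h₁, h₂⟩ := hden t ht.2
    have := ht.1
    positivity
  have hg : ContinuousOn (fun t : ℝ => t ^ (m + 1) / (1 - t) ^ (m + 2)) (Icc 0 x) :=
    ContinuousOn.div (by fun_prop) (by fun_prop) fun t ht => (pow_pos (hden t ht.2).1 _).ne'
  have hg' : ContinuousOn (fun t : ℝ => t ^ (m + 1) / (1 - t) ^ (m + 2) +
      2 * t ^ (m + 3) / ((m + 2) * (1 - t) ^ (m + 1) * (m + 3 - 2 * t) ^ 2)) (Icc 0 x) := by
    refine hg.add (ContinuousOn.div (by fun_prop) (by fun_prop) fun t ht => ?_)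
    obtain ⟨h₁, h₂⟩ := hden t ht.2
    positivity
  calc ∫ t in (0 : ℝ)..x, t ^ (m + 1) / (1 - t) ^ (m + 2)
      < ∫ t in (0 : ℝ)..x, (t ^ (m + 1) / (1 - t) ^ (m + 2) +
          2 * t ^ (m + 3) / ((m + 2) * (1 - t) ^ (m + 1) * (m + 3 - 2 * t) ^ 2)) :=
        intervalIntegral.integral_lt_integral_of_continuousOn_of_le_of_exists_lt hx₀ hg hg'
          (fun t ht => le_add_of_nonneg_right (hextra t ht).le)
          ⟨x, right_mem_Icc.2 hx₀.le, lt_add_of_pos_right _ (hextra x ⟨hx₀, le_rfl⟩)⟩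
    _ = primitiveMajorant m x - primitiveMajorant m 0 := by
        refine intervalIntegral.integral_eq_sub_of_hasDerivAt (fun t ht => ?_) ?_
        · rw [uIcc_of_le hx₀.le] at ht
          exact hasDerivAt_primitiveMajorant m (by linarith [ht.2])
        · exact (hg'.mono (uIcc_of_le hx₀.le).subset).intervalIntegrable
    _ = primitiveMajorant m x := by simp [primitiveMajorant]

/-- `P[N = s + k]` for `N` negative binomial with parameters `s` and `q`. -/
noncomputable def negbinWeight (s : ℕ) (q : ℝ) (k : ℕ) : ℝ :=
  ((s + k - 1).choose (s - 1) : ℝ) * q ^ s * (1 - q) ^ k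

theorem negbinExp_eq_tsum (s : ℕ) (q : ℝ) (f : ℕ → ℝ) :
    negbinExp s q f = ∑' k, negbinWeight s q k * f (s + k) :=
  rfl

theorem negbinExp_div_const (s : ℕ) (q : ℝ) (f : ℕ → ℝ) (c : ℝ) :
    negbinExp s q (fun n => f n / c) = negbinExp s q f / c := by
  simp only [negbinExp_eq_tsum, ← mul_div_assoc, tsum_div_const]

theorem negbinExp2_mul (s₁ : ℕ) (q₁ : ℝ) (s₂ : ℕ) (q₂ : ℝ) (f g : ℕ → ℝ) :
    negbinExp2 s₁ q₁ s₂ q₂ (fun n₁ n₂ => f n₁ * g n₂) = negbinExp s₁ q₁ f * negbinExp s₂ q₂ g := by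
  simp only [negbinExp2, negbinExp, ← tsum_mul_right]
  refine tsum_congr fun k₁ => ?_
  rw [← tsum_mul_left]
  exact tsum_congr fun k₂ => by ring

theorem natCast_mul_negbinWeight {s : ℕ} (hs : 0 < s) (q : ℝ) (k : ℕ) :
    q * ((s + k : ℕ) * negbinWeight s q k) = s * negbinWeight (s + 1) q k := by
  obtain ⟨j, rfl⟩ : ∃ j, s = j + 1 := ⟨s - 1, by omega⟩
  have h : ((j + k + 1 : ℕ) : ℝ) * (j + k).choose j = (j + k + 1).choose (j + 1) * (j + 1 : ℕ) :=
    mod_cast Nat.add_one_mul_choose_eq (j + k) j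
  simp only [negbinWeight, Nat.add_sub_cancel, show j + 1 + 1 + k - 1 = j + k + 1 by omega,
    show j + 1 + k = j + k + 1 by omega]
  linear_combination q ^ (j + 2) * (1 - q) ^ k * h

section

variable {s : ℕ} {q : ℝ}

theorem negbinWeight_nonneg (hq₀ : 0 ≤ q) (hq₁ : q ≤ 1) (k : ℕ) : 0 ≤ negbinWeight s q k := by
  have : 0 ≤ 1 - q := by linarith
  unfold negbinWeight
  positivity

theorem hasSum_negbinWeight (hs : 0 < s) (hq₀ : 0 < q) (hq₁ : q ≤ 1) :
    HasSum (negbinWeight s q) 1 := by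
  obtain ⟨j, rfl⟩ : ∃ j, s = j + 1 := ⟨s - 1, by omega⟩
  have hx : ‖1 - q‖ < 1 := by rw [Real.norm_eq_abs, abs_lt]; constructor <;> linarith
  have h := (hasSum_choose_mul_geometric_of_norm_lt_one j hx).mul_left (q ^ (j + 1))
  rw [sub_sub_cancel, mul_one_div, div_self (by positivity)] at h
  refine h.congr_fun fun k => ?_
  simp only [negbinWeight, Nat.add_sub_cancel, Nat.add_right_comm j 1 k]
  rw [add_comm j k]
  ring

theorem hasSum_negbinWeight_mul_natCast (hs : 0 < s) (hq₀ : 0 < q) (hq₁ : q ≤ 1) :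
    HasSum (fun k => negbinWeight s q k * (s + k : ℕ)) (s / q) := by
  have h := (hasSum_negbinWeight s.succ_pos hq₀ hq₁).mul_left (s / q)
  rw [mul_one] at h
  refine h.congr_fun fun k => ?_
  field_simp
  linear_combination natCast_mul_negbinWeight hs q k

theorem hasSum_negbinWeight_mul_natCast_sq (hs : 0 < s) (hq₀ : 0 < q) (hq₁ : q ≤ 1) :
    HasSum (fun k => negbinWeight s q k * ((s + k : ℕ) : ℝ) ^ 2) (s * (s + 1 - q) / q ^ 2) := by
  have h := ((hasSum_negbinWeight_mul_natCast s.succ_pos hq₀ hq₁).mul_left (s / q)).sub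
    (hasSum_negbinWeight_mul_natCast hs hq₀ hq₁)
  rw [show (s / q * ((s.succ : ℕ) / q) - s / q : ℝ) = s * (s + 1 - q) / q ^ 2 by
    push_cast; field_simp] at h
  refine h.congr_fun fun k => ?_
  have key := natCast_mul_negbinWeight hs q k
  push_cast at key ⊢
  field_simp
  linear_combination (s + 1 + k : ℝ) * key

theorem hasSum_negbinWeight_succ_mul_div_sub_one {r : ℕ} (hr : 0 < r) (hq₀ : 0 < q)
    (hq₁ : q ≤ 1) :
    HasSum (fun k => negbinWeight (r + 1) q k * (r / ((r + 1 + k : ℕ) - 1))) q := by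
  have h := (hasSum_negbinWeight hr hq₀ hq₁).mul_left q
  rw [mul_one] at h
  refine h.congr_fun fun k => ?_
  have hk : ((r + k : ℕ) : ℝ) ≠ 0 := by positivity
  rw [show ((r + 1 + k : ℕ) : ℝ) - 1 = (r + k : ℕ) by push_cast; ring]
  rw [← mul_div_assoc, div_eq_iff hk]
  linear_combination -natCast_mul_negbinWeight hr q k

theorem negbinExp_natCast (hs : 0 < s) (hq₀ : 0 < q) (hq₁ : q ≤ 1) :
    negbinExp s q (fun n => (n : ℝ)) = s / q :=
  (hasSum_negbinWeight_mul_natCast hs hq₀ hq₁).tsum_eq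

theorem negbinExp_natCast_sq (hs : 0 < s) (hq₀ : 0 < q) (hq₁ : q ≤ 1) :
    negbinExp s q (fun n => (n : ℝ) ^ 2) = s * (s + 1 - q) / q ^ 2 :=
  (hasSum_negbinWeight_mul_natCast_sq hs hq₀ hq₁).tsum_eq

theorem negbinExp_succ_div_sub_one {r : ℕ} (hr : 0 < r) (hq₀ : 0 < q) (hq₁ : q ≤ 1) :
    negbinExp (r + 1) q (fun n => (r : ℝ) / (n - 1)) = q :=
  (hasSum_negbinWeight_succ_mul_div_sub_one hr hq₀ hq₁).tsum_eq

theorem summable_negbinWeight_succ_mul_div_sq (r : ℕ) (hq₀ : 0 < q) (hq₁ : q ≤ 1) :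
    Summable fun k => negbinWeight (r + 1) q k * (r / ((r + 1 + k : ℕ) - 1 : ℝ)) ^ 2 := by
  refine Summable.of_nonneg_of_le (fun k => mul_nonneg (negbinWeight_nonneg hq₀.le hq₁ k)
    (sq_nonneg _)) (fun k => ?_) (hasSum_negbinWeight r.succ_pos hq₀ hq₁).summable
  have hX : (r / ((r + 1 + k : ℕ) - 1 : ℝ)) ^ 2 ≤ 1 := by
    rw [show ((r + 1 + k : ℕ) - 1 : ℝ) = r + k by push_cast; ring]
    exact pow_le_one₀ (by positivity) (div_le_one_of_le₀ (by simp) (by positivity))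
  simpa using mul_le_mul_of_nonneg_left hX (negbinWeight_nonneg hq₀.le hq₁ k)

theorem sq_le_negbinExp_succ_div_sq {r : ℕ} (hr : 0 < r) (hq₀ : 0 < q) (hq₁ : q ≤ 1) :
    q ^ 2 ≤ negbinExp (r + 1) q (fun n => ((r : ℝ) / (n - 1)) ^ 2) :=
  sq_le_of_hasSum (negbinWeight_nonneg hq₀.le hq₁) (hasSum_negbinWeight r.succ_pos hq₀ hq₁)
    (hasSum_negbinWeight_succ_mul_div_sub_one hr hq₀ hq₁)
    (summable_negbinWeight_succ_mul_div_sq r hq₀ hq₁).hasSum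

end

theorem negbinExp_succ_div_sq_lt {r : ℕ} (hr : 2 ≤ r) {p : ℝ} (hp₀ : 0 < p) (hp₁ : p < 1) :
    negbinExp (r + 1) p (fun n => ((r : ℝ) / (n - 1)) ^ 2) <
      p ^ 2 * (r ^ 2 - r + (2 * r - 1) * p + p ^ 2) / ((r - 1 + p) * (r - 1 + 2 * p)) := by
  obtain ⟨m, rfl⟩ : ∃ m, r = m + 2 := ⟨r - 2, by omega⟩
  have hq : 0 < 1 - p := by linarith
  have hterm (k : ℕ) : (1 - p) ^ (m + 2) *
      (negbinWeight (m + 2 + 1) p k * ((m + 2 : ℕ) / ((m + 2 + 1 + k : ℕ) - 1 : ℝ)) ^ 2) =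
      (m + 2) * p ^ (m + 3) * (((k + (m + 1)).choose (m + 1) : ℝ) *
        (1 - p) ^ (k + (m + 1) + 1) / (k + (m + 1 : ℕ) + 1)) := by
    have key := natCast_mul_negbinWeight (s := m + 2) (by omega) p k
    rw [show negbinWeight (m + 2) p k =
        ((k + (m + 1)).choose (m + 1) : ℝ) * p ^ (m + 2) * (1 - p) ^ k by
      simp only [negbinWeight, show m + 2 + k - 1 = k + (m + 1) by omega,
        show m + 2 - 1 = m + 1 by omega]] at key
    have hk : (m : ℝ) + 2 + k ≠ 0 := by positivity
    rw [eq_div_of_mul_eq (by positivity) ((mul_comm _ _).trans key.symm),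
      show ((m + 2 + 1 + k : ℕ) - 1 : ℝ) = m + 2 + k by push_cast; ring]
    push_cast
    field_simp
    ring
  have hT := tsum_choose_mul_pow_div_le_integral (m + 1) hq.le (by linarith : 1 - p < 1)
  have hI := integral_lt_primitiveMajorant m hq (by linarith : 1 - p < 1)
  refine lt_of_mul_lt_mul_left ?_ (pow_nonneg hq.le (m + 2))
  calc (1 - p) ^ (m + 2) * negbinExp (m + 2 + 1) p (fun n => (((m + 2 : ℕ) : ℝ) / (n - 1)) ^ 2)
      = (m + 2) * p ^ (m + 3) * ∑' k : ℕ, ((k + (m + 1)).choose (m + 1) : ℝ) *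
          (1 - p) ^ (k + (m + 1) + 1) / (k + (m + 1 : ℕ) + 1) := by
        rw [negbinExp_eq_tsum, ← tsum_mul_left, ← tsum_mul_left]
        exact tsum_congr hterm
    _ < (m + 2) * p ^ (m + 3) * primitiveMajorant m (1 - p) :=
        mul_lt_mul_of_pos_left (hT.trans_lt hI) (by positivity)
    _ = _ := by
        have h₁ : (m : ℝ) + 1 + p ≠ 0 := by positivity
        have h₂ : (m : ℝ) + 1 + 2 * p ≠ 0 := by positivity
        simp only [primitiveMajorant]
        push_cast
        field_simp
        ring

theorem variance_ghat_eq {r : ℕ} (hr : 2 ≤ r) {p : ℝ} (hp₀ : 0 < p) (hp₁ : p < 1) :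
    negbinExp2 (r + 1) p (r - 1) (1 - p) (fun n₁ n₂ => ghat r n₁ n₂ ^ 2) -
        negbinExp2 (r + 1) p (r - 1) (1 - p) (ghat r) ^ 2 =
      negbinExp (r + 1) p (fun n => ((r : ℝ) / (n - 1)) ^ 2) *
          ((r - 1 + p) / ((r - 1) * (1 - p) ^ 2)) - (p / (1 - p)) ^ 2 := by
  have hr₁ : (1 : ℝ) < r := by exact_mod_cast hr
  have hq : 0 < 1 - p := by linarith
  have hcast : ((r - 1 : ℕ) : ℝ) = r - 1 := by rw [Nat.cast_sub (by omega), Nat.cast_one]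
  have hr₀ : (r : ℝ) - 1 ≠ 0 := by linarith
  have hE₁ : negbinExp (r - 1) (1 - p) (fun n => (n : ℝ) / (r - 1)) = 1 / (1 - p) := by
    rw [negbinExp_div_const, negbinExp_natCast (by omega) hq (by linarith), hcast]
    field_simp
  have hE₂ : negbinExp (r - 1) (1 - p) (fun n => ((n : ℝ) / (r - 1)) ^ 2) =
      (r - 1 + p) / ((r - 1) * (1 - p) ^ 2) := by
    simp_rw [div_pow]
    rw [negbinExp_div_const, negbinExp_natCast_sq (by omega) hq (by linarith), hcast]
    field_simp
    ring
  unfold ghat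
  simp only [mul_pow]
  rw [negbinExp2_mul, negbinExp2_mul, hE₁, hE₂, negbinExp_succ_div_sub_one (by omega) hp₀ hp₁.le]
  ring

theorem variance_ghat_mem_Ioo {r : ℕ} (hr : 2 ≤ r) {p : ℝ} (hp₀ : 0 < p) (hp₁ : p < 1) :
    negbinExp2 (r + 1) p (r - 1) (1 - p) (fun n₁ n₂ => ghat r n₁ n₂ ^ 2) -
        negbinExp2 (r + 1) p (r - 1) (1 - p) (ghat r) ^ 2 ∈
      Ioo 0 (p ^ 2 * (r - 1 + p + p ^ 2) / ((1 - p) ^ 2 * (r - 1) * (r - 1 + 2 * p))) := by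
  have hA₀ := sq_le_negbinExp_succ_div_sq (by omega : 0 < r) hp₀ hp₁.le
  have hA₁ := negbinExp_succ_div_sq_lt hr hp₀ hp₁
  rw [variance_ghat_eq hr hp₀ hp₁]
  set A := negbinExp (r + 1) p (fun n => ((r : ℝ) / (n - 1)) ^ 2)
  have hr₀ : (0 : ℝ) < r - 1 := by linarith [(Nat.ofNat_le_cast (α := ℝ)).2 hr]
  have hq : 0 < 1 - p := by linarith
  have hc : 0 < ((r : ℝ) - 1 + p) / ((r - 1) * (1 - p) ^ 2) := by positivity
  constructor
  · rw [sub_pos]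
    calc (p / (1 - p)) ^ 2 < p ^ 2 * (((r : ℝ) - 1 + p) / ((r - 1) * (1 - p) ^ 2)) := by
          field_simp
          nlinarith [pow_pos hp₀ 3]
      _ ≤ A * (((r : ℝ) - 1 + p) / ((r - 1) * (1 - p) ^ 2)) := by gcongr
  · calc _ < p ^ 2 * (r ^ 2 - r + (2 * r - 1) * p + p ^ 2) / ((r - 1 + p) * (r - 1 + 2 * p)) *
            (((r : ℝ) - 1 + p) / ((r - 1) * (1 - p) ^ 2)) - (p / (1 - p)) ^ 2 := by gcongr
      _ = _ := by
          field_simp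
          ring

theorem efficiency_bound_gt {r p : ℝ} (hr : 1 < r) (hp₀ : 0 < p) (hp₁ : p < 1) :
    (r - 1) / (r + 1 - 2 * p) * (1 + p * (1 - p) / (r - 1 + p + p ^ 2)) > (r - 1) / (r + 1) := by
  have h₁ : 0 < r + 1 - 2 * p := by linarith
  have h₂ : 0 < r - 1 + p + p ^ 2 := by positivity
  rw [gt_iff_lt, ← sub_pos]
  have key : (r - 1) / (r + 1 - 2 * p) * (1 + p * (1 - p) / (r - 1 + p + p ^ 2)) -
      (r - 1) / (r + 1) = (r - 1) * p * (r + 1 + (r - 1) * (2 - p) + 2 * p ^ 2) /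
        ((r + 1) * (r + 1 - 2 * p) * (r - 1 + p + p ^ 2)) := by
    field_simp
    ring
  rw [key]
  have : 0 < r - 1 := by linarith
  have : 0 < 2 - p := by linarith
  positivity

theorem odds_estimator_efficiency (r : ℕ) (hr : 2 ≤ r) (p : ℝ) (hp0 : 0 < p) (hp1 : p < 1)
    (V S : ℝ)
    (hV : V = negbinExp2 (r + 1) p (r - 1) (1 - p) (fun n₁ n₂ => (ghat r n₁ n₂) ^ 2) -
        (negbinExp2 (r + 1) p (r - 1) (1 - p) (ghat r)) ^ 2)
    (hS : S = negbinExp (r + 1) p (fun n => (n : ℝ)) +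
        negbinExp (r - 1) (1 - p) (fun n => (n : ℝ))) :
    p / ((1 - p) ^ 3 * V * S) >
        (((r : ℝ) - 1) / ((r : ℝ) + 1 - 2 * p)) *
          (1 + p * (1 - p) / ((r : ℝ) - 1 + p + p ^ 2)) ∧
      (((r : ℝ) - 1) / ((r : ℝ) + 1 - 2 * p)) *
          (1 + p * (1 - p) / ((r : ℝ) - 1 + p + p ^ 2)) >
        ((r : ℝ) - 1) / ((r : ℝ) + 1) := by
  have hr₁ : (1 : ℝ) < r := by exact_mod_cast hr
  have hq : 0 < 1 - p := by linarith
  have hS' : S = (r + 1 - 2 * p) / (p * (1 - p)) := by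
    rw [hS, negbinExp_natCast (by omega) hp0 hp1.le, negbinExp_natCast (by omega) hq (by linarith),
      Nat.cast_sub (by omega)]
    push_cast
    field_simp
    ring
  have hS₀ : 0 < S := by rw [hS']; exact div_pos (by linarith) (by positivity)
  obtain ⟨hV₀, hV₁⟩ := hV ▸ variance_ghat_mem_Ioo hr hp0 hp1
  refine ⟨?_, efficiency_bound_gt hr₁ hp0 hp1⟩
  calc p / ((1 - p) ^ 3 * V * S)
      > p / ((1 - p) ^ 3 * (p ^ 2 * (r - 1 + p + p ^ 2) /
          ((1 - p) ^ 2 * (r - 1) * (r - 1 + 2 * p))) * S) := by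
        apply div_lt_div_of_pos_left hp0 (by positivity)
        gcongr
    _ = _ := by
        have : (r : ℝ) + 1 - 2 * p ≠ 0 := by linarith
        have : (r : ℝ) - 1 + p + p ^ 2 ≠ 0 := by positivity
        have : (r : ℝ) - 1 + 2 * p ≠ 0 := by linarith
        rw [hS']
        field_simp
        ring
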